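/- arXiv:2208.00038 — 4 statements merged into one kernel-verified Lean document; each statement's English description precedes it below -/
import Mathlib

section
/- Let Φ be a filter on I, X_i = (X_i, ρ_i) binary structures with reflexive relations ρ_i, and x, y ∈ ∏_{i∈I} X_i with A ⊆ I such that x and y agree on I∖A. Suppose there are n ∈ ω and a fixed sign pattern ε ∈ 2^{n+1} such that for each i ∈ A there exists z̄ ∈ X_i^n making (z̄, ε) a path from x_i to y_i in X_i. Then in the reduced product ∏_Φ X_i there is a path (of length n+1, with the same sign pattern ε) from [x]_Φ to [y]_Φ. -/
/-- Reflexivization of a binary relation. -/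
def rRefl {X : Type*} (ρ : X → X → Prop) : X → X → Prop := fun a b => ρ a b ∨ a = b

/-- Signed step: `ρ` for `false`, `ρ⁻¹` for `true` (after reflexivizing). -/
def rStep {X : Type*} (ρ : X → X → Prop) : Bool → X → X → Prop :=
  fun e a b => if e then rRefl ρ b a else rRefl ρ a b

/-- `(z, ε)` is a path of length `n+1` from `x` to `y`. -/
def pathPts {X : Type*} {n : ℕ} (x y : X) (z : Fin n → X) : Fin (n + 2) → X :=
  Fin.cons x (Fin.snoc z y)

def IsPath {X : Type*} (ρ : X → X → Prop) {n : ℕ} (z : Fin n → X)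
    (ε : Fin (n + 1) → Bool) (x y : X) : Prop :=
  ∀ k : Fin (n + 1), rStep ρ (ε k) (pathPts x y z k.castSucc) (pathPts x y z k.succ)

/-- There is a path of length `≤ n+1` from `x` to `y`. -/
def dLE {X : Type*} (ρ : X → X → Prop) (n : ℕ) (x y : X) : Prop :=
  ∃ m, m ≤ n ∧ ∃ z : Fin m → X, ∃ ε : Fin (m + 1) → Bool, IsPath ρ z ε x y

/-- A binary structure is connected iff any two points are joined by a finite path. -/
def Conn {X : Type*} (ρ : X → X → Prop) : Prop := ∀ x y : X, ∃ n, dLE ρ n x y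

/-- The setoid of a reduced product: agreement on a set in the filter. -/
def redSetoid {I : Type*} (Φ : Filter I) (X : I → Type*) : Setoid (∀ i, X i) where
  r x y := {i | x i = y i} ∈ Φ
  iseqv := by
    refine ⟨fun x => ?_, fun h => ?_, fun h1 h2 => ?_⟩
    · simpa using Filter.univ_mem
    · filter_upwards [h] with i e using e.symm
    · filter_upwards [h1, h2] with i e1 e2 using e1.trans e2

/-- The relation of the reduced product. -/
def redRel {I : Type*} (Φ : Filter I) {X : I → Type*} (ρ : ∀ i, X i → X i → Prop) :
    Quotient (redSetoid Φ X) → Quotient (redSetoid Φ X) → Prop :=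
  Quotient.lift₂ (fun x y => {i | ρ i (x i) (y i)} ∈ Φ)
    (by
      intro a b a' b' ha hb
      have ha' : {i | a i = a' i} ∈ Φ := ha
      have hb' : {i | b i = b' i} ∈ Φ := hb
      apply propext
      constructor
      · intro h
        filter_upwards [h, ha', hb'] with i h1 h2 h3
        rw [← h2, ← h3]; exact h1
      · intro h
        filter_upwards [h, ha', hb'] with i h1 h2 h3
        rw [h2, h3]; exact h1)

/-- The coordinatewise relation of the direct product. -/
def dirRel {I : Type*} {X : I → Type*} (ρ : ∀ i, X i → X i → Prop) :
    (∀ i, X i) → (∀ i, X i) → Prop := fun x y => ∀ i, ρ i (x i) (y i)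

/-- A non-principal ultrafilter contains no singleton. -/
def NonPrincipal {I : Type*} (U : Ultrafilter I) : Prop := ∀ a : I, {a} ∉ U

/-- An `ω`-complete (countably complete) ultrafilter. -/
def OmegaComplete {I : Type*} (U : Ultrafilter I) : Prop :=
  ∀ f : ℕ → Set I, (∀ n, f n ∈ U) → (⋂ n, f n) ∈ U

/-- `|I|` is less than the first measurable cardinal: no subset of `I` carries a
non-principal `ω`-complete ultrafilter. -/
def NoMeasurableLE (I : Type*) : Prop :=
  ∀ J : Set I, ∀ U : Ultrafilter J, ¬ (NonPrincipal U ∧ OmegaComplete U)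

/-- The linear graph on `ω`. -/
def linRel : ℕ → ℕ → Prop := fun m n => Nat.dist m n = 1

/-! Outside `A` pad with the constant path at `x i = y i`, which is a path for every sign
pattern because each step may be an equality. Since every `ρ i` is reflexive, a step that is
`ρ i` or an equality in each coordinate is a step of the direct product, so the coordinatewise
paths form a path in `∏ X_i`; the quotient map onto `∏_Φ X_i` preserves the relation and hence
carries it to the required path. -/

section Paths

variable {X Y : Type*} {ρ : X → X → Prop} {σ : Y → Y → Prop}

theorem rRefl_iff_of_reflexive (h : Reflexive ρ) {a b : X} : rRefl ρ a b ↔ ρ a b :=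
  ⟨fun hab => hab.elim id fun e => e ▸ h a, Or.inl⟩

theorem rRefl.map {f : X → Y} (hf : ∀ a b, ρ a b → σ (f a) (f b)) {a b : X}
    (hab : rRefl ρ a b) : rRefl σ (f a) (f b) :=
  hab.imp (hf a b) (congrArg f)

theorem rStep.map {f : X → Y} (hf : ∀ a b, ρ a b → σ (f a) (f b)) {e : Bool} {a b : X}
    (hab : rStep ρ e a b) : rStep σ e (f a) (f b) := by
  cases e <;> exact rRefl.map hf hab

theorem pathPts_comp (f : X → Y) {n : ℕ} (x y : X) (z : Fin n → X) :
    pathPts (f x) (f y) (f ∘ z) = f ∘ pathPts x y z := by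
  rw [pathPts, pathPts, Fin.comp_cons, Fin.comp_snoc]

theorem IsPath.map {f : X → Y} (hf : ∀ a b, ρ a b → σ (f a) (f b)) {n : ℕ} {z : Fin n → X}
    {ε : Fin (n + 1) → Bool} {x y : X} (hp : IsPath ρ z ε x y) :
    IsPath σ (f ∘ z) ε (f x) (f y) := fun k => by
  rw [pathPts_comp]
  exact (hp k).map hf

theorem isPath_const (ρ : X → X → Prop) {n : ℕ} (ε : Fin (n + 1) → Bool) (x : X) :
    IsPath ρ (fun _ : Fin n => x) ε x x := by
  have hpts : pathPts x x (fun _ : Fin n => x) = fun _ => x :=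
    pathPts_comp (fun _ : Unit => x) () () (fun _ : Fin n => ())
  intro k
  rw [hpts]
  cases ε k <;> exact Or.inr rfl

end Paths

section Products

variable {I : Type*} {X : I → Type*} {ρ : ∀ i, X i → X i → Prop}

theorem pathPts_apply {n : ℕ} (x y : ∀ i, X i) (z : Fin n → ∀ i, X i) (k : Fin (n + 2))
    (i : I) : pathPts x y z k i = pathPts (x i) (y i) (fun m => z m i) k :=
  (congrFun (pathPts_comp (fun a : ∀ i, X i => a i) x y z) k).symm

theorem rStep_dirRel (hrefl : ∀ i, Reflexive (ρ i)) {e : Bool} {a b : ∀ i, X i}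
    (h : ∀ i, rStep (ρ i) e (a i) (b i)) : rStep (dirRel ρ) e a b := by
  cases e <;> exact Or.inl fun i => (rRefl_iff_of_reflexive (hrefl i)).1 (h i)

theorem isPath_dirRel (hrefl : ∀ i, Reflexive (ρ i)) {n : ℕ} {z : Fin n → ∀ i, X i}
    {ε : Fin (n + 1) → Bool} {x y : ∀ i, X i}
    (h : ∀ i, IsPath (ρ i) (fun m => z m i) ε (x i) (y i)) :
    IsPath (dirRel ρ) z ε x y := fun k =>
  rStep_dirRel hrefl fun i => by
    simpa only [pathPts_apply] using h i k

theorem redRel_mk_of_dirRel (Φ : Filter I) {a b : ∀ i, X i} (h : dirRel ρ a b) :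
    redRel Φ ρ (Quotient.mk (redSetoid Φ X) a) (Quotient.mk (redSetoid Φ X) b) :=
  Filter.univ_mem' h

end Products

theorem stmt_1_general {I : Type*} (Φ : Filter I) {X : I → Type*}
    (ρ : ∀ i, X i → X i → Prop) (hrefl : ∀ i, Reflexive (ρ i))
    (x y : ∀ i, X i) (A : Set I) (hxy : ∀ i ∉ A, x i = y i)
    (n : ℕ) (ε : Fin (n + 1) → Bool)
    (hA : ∀ i ∈ A, ∃ z : Fin n → X i, IsPath (ρ i) z ε (x i) (y i)) :
    ∃ Z : Fin n → Quotient (redSetoid Φ X),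
      IsPath (redRel Φ ρ) Z ε (Quotient.mk (redSetoid Φ X) x)
        (Quotient.mk (redSetoid Φ X) y) := by
  classical
  choose z hz using hA
  let w : Fin n → ∀ i, X i := fun m i => if h : i ∈ A then z i h m else x i
  have hw : ∀ i, IsPath (ρ i) (fun m => w m i) ε (x i) (y i) := by
    intro i
    by_cases h : i ∈ A
    · simpa only [w, dif_pos h] using hz i h
    · simpa only [w, dif_neg h, hxy i h] using isPath_const (ρ i) ε (y i)
  exact ⟨_, (isPath_dirRel hrefl hw).map fun _ _ => redRel_mk_of_dirRel Φ⟩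

theorem stmt_1 {I : Type*} (Φ : Filter I) [Φ.NeBot] {X : I → Type*}
    (ρ : ∀ i, X i → X i → Prop) (hrefl : ∀ i, Reflexive (ρ i))
    (x y : ∀ i, X i) (A : Set I) (hxy : ∀ i ∉ A, x i = y i)
    (n : ℕ) (ε : Fin (n + 1) → Bool)
    (hA : ∀ i ∈ A, ∃ z : Fin n → X i, IsPath (ρ i) z ε (x i) (y i)) :
    ∃ Z : Fin n → Quotient (redSetoid Φ X),
      IsPath (redRel Φ ρ) Z ε (Quotient.mk (redSetoid Φ X) x)
        (Quotient.mk (redSetoid Φ X) y) :=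
  stmt_1_general Φ ρ hrefl x y A hxy n ε hA
end

section
/- Let κ be an infinite cardinal that is not measurable, and let Φ be a filter on κ all of whose elements are infinite sets. Then there is a partition κ = ⋃_{n∈ω} I_n into countably many pieces such that every F ∈ Φ meets I_n for infinitely many n ∈ ω. -/
open Filter

theorem Filter.inf_cofinite_neBot_of_forall_infinite {α : Type*} {Φ : Filter α}
    (hinf : ∀ F ∈ Φ, F.Infinite) : (Φ ⊓ cofinite).NeBot :=
  inf_neBot_iff_frequently_left.mpr fun hp =>
    frequently_cofinite_iff_infinite.mpr (hinf _ hp)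

namespace Ultrafilter

variable {α : Type*} {U : Ultrafilter α}

theorem nonPrincipal_of_le_cofinite (hU : (U : Filter α) ≤ cofinite) : NonPrincipal U :=
  fun a ha => compl_notMem_iff.mpr ha (hU (Set.finite_singleton a).compl_mem_cofinite)

theorem exists_preimage_singleton_mem_of_finite_image {β : Type*} {f : α → β} {F : Set α}
    (hF : F ∈ U) (hfin : (f '' F).Finite) : ∃ b, f ⁻¹' {b} ∈ U := by
  obtain ⟨b, -, hb⟩ :=
    eq_pure_of_finite_mem hfin (mem_map.mpr (mem_of_superset hF (Set.subset_preimage_image f F)))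
  exact ⟨b, mem_map.mp (hb ▸ mem_pure.mpr rfl)⟩

theorem omegaComplete_of_forall_preimage_singleton_mem
    (hU : ∀ f : α → ℕ, ∃ n, f ⁻¹' {n} ∈ U) : OmegaComplete U := by
  classical
  intro g hg
  let f : α → ℕ := fun i => if hi : ∃ n, i ∉ g n then Nat.find hi + 1 else 0
  obtain ⟨n, hn⟩ := hU f
  cases n with
  | zero =>
    refine mem_of_superset hn fun i hi => ?_
    simp only [Set.mem_preimage, Set.mem_singleton_iff, f, dite_eq_right_iff,
      Nat.add_one_ne_zero, imp_false, not_exists, not_not] at hi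
    exact Set.mem_iInter.mpr hi
  | succ m =>
    refine absurd (inter_mem hn (hg m)) fun hmem => ?_
    obtain ⟨i, hi, him⟩ := U.nonempty_of_mem hmem
    have hex : ∃ n, i ∉ g n := by
      by_contra! hall
      simp [f, hall] at hi
    simp only [Set.mem_preimage, Set.mem_singleton_iff, f, dif_pos hex,
      Nat.add_right_cancel_iff] at hi
    exact (hi ▸ Nat.find_spec hex) him

end Ultrafilter

theorem stmt_2_general {I : Type*}
    (hnm : ¬ ∃ U : Ultrafilter I, NonPrincipal U ∧ OmegaComplete U)
    (Φ : Filter I) (hinf : ∀ F ∈ Φ, F.Infinite) :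
    ∃ f : I → ℕ, ∀ F ∈ Φ, {n : ℕ | (F ∩ f ⁻¹' {n}).Nonempty}.Infinite := by
  by_contra! hcon
  have := inf_cofinite_neBot_of_forall_infinite hinf
  obtain ⟨U, hU⟩ := Ultrafilter.exists_le (Φ ⊓ cofinite)
  refine hnm ⟨U, Ultrafilter.nonPrincipal_of_le_cofinite (hU.trans inf_le_right),
    Ultrafilter.omegaComplete_of_forall_preimage_singleton_mem fun f => ?_⟩
  obtain ⟨F, hF, hfin⟩ := hcon f
  refine Ultrafilter.exists_preimage_singleton_mem_of_finite_image (hU (mem_inf_of_left hF)) ?_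
  convert hfin using 1
  ext n
  simp [Set.Nonempty, eq_comm]

theorem stmt_2 {I : Type*} [Infinite I]
    (hnm : ¬ ∃ U : Ultrafilter I, NonPrincipal U ∧ OmegaComplete U)
    (Φ : Filter I) [Φ.NeBot] (hinf : ∀ F ∈ Φ, F.Infinite) :
    ∃ f : I → ℕ, ∀ F ∈ Φ, {n : ℕ | (F ∩ f ⁻¹' {n}).Nonempty}.Infinite :=
  stmt_2_general hnm Φ hinf
end

section
/- Let I be an infinite set with |I| less than the first measurable cardinal, U a non-principal ultrafilter on I, and X_i = (X_i, ρ_i) nonempty binary structures. Then the ultraproduct ∏_U X_i is connected if and only if there is n ∈ ω such that {i ∈ I : every two points of X_i are joined by a path of length ≤ n+1} ∈ U. The backward implication holds in ZFC without restriction on |I|. -/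
/-!
Paths of length at most `n + 1` have finitely many sign patterns, so Łoś's theorem applies to
them: two points of the ultraproduct are at distance `≤ n + 1` iff their coordinates are in
`U`-almost every factor. This gives the backward implication at once. Conversely, below the first
measurable cardinal the non-principal `U` is not countably complete, so some `f : I → ℕ` tends
to infinity along `U`. In each factor `i` pick two points whose distance is at most `n + 1`, for
some `n < f i`, only when the whole factor has diameter at most `n + 1`; a path of length `n + 1`
between the induced points of the ultraproduct then bounds the diameters of `U`-almost all
factors by `n + 1`.
-/

open Filter

section Paths

variable {X : Type*} (ρ : X → X → Prop)

lemma dLE_mono {n m : ℕ} (h : n ≤ m) {x y : X} : dLE ρ n x y → dLE ρ m x y :=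
  fun ⟨k, hk, hpath⟩ => ⟨k, hk.trans h, hpath⟩

lemma pathPts_map {Y : Type*} (f : X → Y) {n : ℕ} (x y : X) (z : Fin n → X)
    (k : Fin (n + 2)) :
    pathPts (f x) (f y) (fun j => f (z j)) k = f (pathPts x y z k) := by
  refine Fin.cases rfl (fun j => ?_) k
  refine Fin.lastCases ?_ (fun j => ?_) j <;> simp [pathPts]

lemma pathPts_cons {n : ℕ} (x y : X) (z : Fin n → X) :
    pathPts x y (Fin.cons x z) = Fin.cons x (pathPts x y z) := by
  simp only [pathPts, Fin.cons_snoc_eq_snoc_cons]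

variable {ρ}

lemma IsPath.cons {n : ℕ} {z : Fin n → X} {ε : Fin (n + 1) → Bool} {x y : X}
    (h : IsPath ρ z ε x y) : IsPath ρ (Fin.cons x z) (Fin.cons false ε) x y := by
  intro k
  rw [pathPts_cons]
  refine Fin.cases ?_ (fun j => ?_) k
  · simp [rStep, rRefl, pathPts]
  · simpa using h j

lemma exists_isPath_of_dLE {n : ℕ} {x y : X} (h : dLE ρ n x y) :
    ∃ z : Fin n → X, ∃ ε : Fin (n + 1) → Bool, IsPath ρ z ε x y := by
  obtain ⟨m, hm, z, ε, hpath⟩ := h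
  induction n, hm using Nat.le_induction with
  | base => exact ⟨z, ε, hpath⟩
  | succ n _ ih =>
    obtain ⟨z', ε', hpath'⟩ := ih
    exact ⟨_, _, hpath'.cons⟩

end Paths

lemma Ultrafilter.exists_eventually_eq_of_finite {I α : Type*} [Finite α] (U : Ultrafilter I)
    (f : I → α) : ∃ a, ∀ᶠ i in (U : Filter I), f i = a := by
  obtain ⟨a, ha⟩ := (U.map f).eq_pure_of_finite
  have hmem : ({a} : Set α) ∈ U.map f := ha ▸ Ultrafilter.mem_pure.mpr rfl
  exact ⟨a, Ultrafilter.mem_map.mp hmem⟩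

section ReducedProduct

variable {I : Type*} (U : Ultrafilter I) {X : I → Type*} (ρ : ∀ i, X i → X i → Prop)

lemma rRefl_redRel_mk_iff (x y : ∀ i, X i) :
    rRefl (redRel (U : Filter I) ρ) (Quotient.mk _ x) (Quotient.mk _ y) ↔
      ∀ᶠ i in (U : Filter I), rRefl (ρ i) (x i) (y i) :=
  (or_congr Iff.rfl Quotient.eq).trans Ultrafilter.eventually_or.symm

lemma rStep_redRel_mk_iff (e : Bool) (x y : ∀ i, X i) :
    rStep (redRel (U : Filter I) ρ) e (Quotient.mk _ x) (Quotient.mk _ y) ↔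
      ∀ᶠ i in (U : Filter I), rStep (ρ i) e (x i) (y i) := by
  cases e
  · exact rRefl_redRel_mk_iff U ρ x y
  · exact rRefl_redRel_mk_iff U ρ y x

lemma isPath_redRel_mk_iff {n : ℕ} (z : Fin n → ∀ i, X i) (ε : Fin (n + 1) → Bool)
    (x y : ∀ i, X i) :
    IsPath (redRel (U : Filter I) ρ) (fun k => Quotient.mk _ (z k)) ε
        (Quotient.mk _ x) (Quotient.mk _ y) ↔
      ∀ᶠ i in (U : Filter I), IsPath (ρ i) (fun k => z k i) ε (x i) (y i) := by
  simp only [IsPath, eventually_all, pathPts_map (Quotient.mk (redSetoid (U : Filter I) X)),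
    rStep_redRel_mk_iff, pathPts_map (fun w : ∀ i, X i => w _)]

lemma dLE_redRel_mk_iff (n : ℕ) (x y : ∀ i, X i) :
    dLE (redRel (U : Filter I) ρ) n (Quotient.mk _ x) (Quotient.mk _ y) ↔
      ∀ᶠ i in (U : Filter I), dLE (ρ i) n (x i) (y i) := by
  constructor
  · rintro ⟨m, hm, z, ε, hpath⟩
    rw [show z = fun k => Quotient.mk _ (z k).out from funext fun k => (z k).out_eq.symm,
      isPath_redRel_mk_iff] at hpath
    exact hpath.mono fun i hi => ⟨m, hm, _, ε, hi⟩
  · intro h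
    have hchoice : ∀ i, ∃ z : Fin n → X i, ∃ ε : Fin (n + 1) → Bool,
        dLE (ρ i) n (x i) (y i) → IsPath (ρ i) z ε (x i) (y i) := fun i => by
      by_cases hi : dLE (ρ i) n (x i) (y i)
      · obtain ⟨z, ε, hpath⟩ := exists_isPath_of_dLE hi
        exact ⟨z, ε, fun _ => hpath⟩
      · exact ⟨fun _ => x i, fun _ => false, fun h' => absurd h' hi⟩
    choose z ε hpath using hchoice
    obtain ⟨E, hE⟩ := U.exists_eventually_eq_of_finite ε
    refine ⟨n, le_rfl, fun k => Quotient.mk _ fun i => z i k, E, ?_⟩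
    rw [isPath_redRel_mk_iff]
    filter_upwards [h, hE] with i hi hεi
    exact hεi ▸ hpath i hi

end ReducedProduct

lemma exists_pair_dLE_imp_forall_dLE {X : Type*} [Nonempty X] (ρ : X → X → Prop) (N : ℕ) :
    ∃ a b : X, ∀ n < N, dLE ρ n a b → ∀ a' b' : X, dLE ρ n a' b' := by
  induction N with
  | zero =>
    exact ⟨Classical.arbitrary X, Classical.arbitrary X, fun n hn => absurd hn n.not_lt_zero⟩
  | succ N ih =>
    by_cases hN : ∀ a' b' : X, dLE ρ N a' b'
    · obtain ⟨a, b, hab⟩ := ih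
      refine ⟨a, b, fun n hn hdist => ?_⟩
      rcases Nat.lt_succ_iff_lt_or_eq.mp hn with hn | rfl
      exacts [hab n hn hdist, hN]
    · obtain ⟨a, b, hab⟩ : ∃ a b : X, ¬ dLE ρ N a b := by simpa using hN
      exact ⟨a, b, fun n hn hdist => absurd (dLE_mono ρ (Nat.lt_succ_iff.mp hn) hdist) hab⟩

section Completeness

variable {I : Type*} {U : Ultrafilter I}

lemma OmegaComplete.map {J : Type*} (hU : OmegaComplete U) (g : I → J) :
    OmegaComplete (U.map g) := fun f hf => by
  simpa only [Ultrafilter.mem_map, Set.preimage_iInter] using hU _ hf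

lemma NonPrincipal.map_equiv {J : Type*} (hU : NonPrincipal U) (e : I ≃ J) :
    NonPrincipal (U.map e) := fun a ha => by
  rw [Ultrafilter.mem_map, show e ⁻¹' {a} = {e.symm a} by ext; simp [Equiv.eq_symm_apply]] at ha
  exact hU _ ha

lemma not_omegaComplete_of_noMeasurableLE (hI : NoMeasurableLE I) (hU : NonPrincipal U) :
    ¬ OmegaComplete U := fun hc =>
  hI Set.univ _ ⟨hU.map_equiv (Equiv.Set.univ I).symm, hc.map _⟩

lemma exists_tendsto_atTop_of_not_omegaComplete (hU : ¬ OmegaComplete U) :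
    ∃ f : I → ℕ, Tendsto f (U : Filter I) atTop := by
  simp only [OmegaComplete, not_forall] at hU
  obtain ⟨s, hs, hsInter⟩ := hU
  refine ⟨fun i => sInf {n | i ∉ s n}, tendsto_atTop.mpr fun m => ?_⟩
  filter_upwards [U.compl_mem_iff_notMem.mpr hsInter,
    (eventually_all_finite (Set.finite_Iio m)).mpr fun k _ => hs k] with i hi hlt
  obtain ⟨n, hn⟩ : ∃ n, i ∉ s n := by simpa using hi
  by_contra! hm
  exact Nat.sInf_mem (s := {n | i ∉ s n}) ⟨n, hn⟩ (hlt _ hm)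

end Completeness

section Connectedness

variable {I : Type*} (U : Ultrafilter I) {X : I → Type*} (ρ : ∀ i, X i → X i → Prop)

theorem conn_redRel_of_eventually_dLE {n : ℕ}
    (h : ∀ᶠ i in (U : Filter I), ∀ a b : X i, dLE (ρ i) n a b) :
    Conn (redRel (U : Filter I) ρ) := by
  rintro ⟨x⟩ ⟨y⟩
  exact ⟨n, (dLE_redRel_mk_iff U ρ n x y).mpr (h.mono fun i hi => hi _ _)⟩

theorem exists_eventually_dLE_of_conn_redRel [∀ i, Nonempty (X i)] (hU : ¬ OmegaComplete U)
    (hconn : Conn (redRel (U : Filter I) ρ)) :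
    ∃ n : ℕ, ∀ᶠ i in (U : Filter I), ∀ a b : X i, dLE (ρ i) n a b := by
  by_contra! hunbounded
  obtain ⟨f, hf⟩ := exists_tendsto_atTop_of_not_omegaComplete hU
  choose x y hxy using fun i => exists_pair_dLE_imp_forall_dLE (ρ i) (f i)
  obtain ⟨n, hn⟩ := hconn (Quotient.mk _ x) (Quotient.mk _ y)
  obtain ⟨i, hdist, hlt, a, b, hab⟩ := (((dLE_redRel_mk_iff U ρ n x y).mp hn).and
    ((hf.eventually_gt_atTop n).and (hunbounded n))).exists
  exact hab (hxy i n hlt hdist a b)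

end Connectedness

theorem stmt_8_general {I : Type*} (U : Ultrafilter I) (hU : NonPrincipal U)
    {X : I → Type*} [∀ i, Nonempty (X i)] (ρ : ∀ i, X i → X i → Prop) :
    (NoMeasurableLE I →
      (Conn (redRel (U : Filter I) ρ) ↔
        ∃ n : ℕ, {i | ∀ a b : X i, dLE (ρ i) n a b} ∈ U)) ∧
    ((∃ n : ℕ, {i | ∀ a b : X i, dLE (ρ i) n a b} ∈ U) →
      Conn (redRel (U : Filter I) ρ)) := by
  have hback : (∃ n : ℕ, {i | ∀ a b : X i, dLE (ρ i) n a b} ∈ U) →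
      Conn (redRel (U : Filter I) ρ) :=
    fun ⟨_, hn⟩ => conn_redRel_of_eventually_dLE U ρ hn
  refine ⟨fun hI => ⟨?_, hback⟩, hback⟩
  exact exists_eventually_dLE_of_conn_redRel U ρ (not_omegaComplete_of_noMeasurableLE hI hU)

theorem stmt_8 {I : Type*} [Infinite I] (U : Ultrafilter I) (hU : NonPrincipal U)
    {X : I → Type*} [∀ i, Nonempty (X i)] (ρ : ∀ i, X i → X i → Prop) :
    (NoMeasurableLE I →
      (Conn (redRel (U : Filter I) ρ) ↔
        ∃ n : ℕ, {i | ∀ a b : X i, dLE (ρ i) n a b} ∈ U)) ∧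
    ((∃ n : ℕ, {i | ∀ a b : X i, dLE (ρ i) n a b} ∈ U) →
      Conn (redRel (U : Filter I) ρ)) :=
  stmt_8_general U hU ρ
end

section
/- Let I be an infinite set with |I| less than the first measurable cardinal and U a non-principal ultrafilter on I. Then the ultrapower ∏_U G_ω of the linear graph G_ω = (ω, {(m,n) : |m−n| = 1}) is a disconnected graph. -/
/-!
Below the first measurable cardinal a non-principal ultrafilter `U` on `I` is not countably
complete, so some sequence of sets in `U` has intersection outside `U`; the index of the first
set missing a given coordinate is then a function `g : I → ℕ` tending to infinity along `U`.
A path of length `n` in the ultrapower moves each coordinate, `U`-almost everywhere, by at most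
`n`, so no path joins the class of the constant `0` to the class of `g`.
-/

open Filter

namespace Ultrafilter

variable {I : Type*}

theorem not_omegaComplete_of_noMeasurableLE (hI : NoMeasurableLE I) {U : Ultrafilter I}
    (hU : NonPrincipal U) : ¬ OmegaComplete U := by
  intro hU_complete
  let e : I → (Set.univ : Set I) := fun i => ⟨i, trivial⟩
  refine hI Set.univ (U.map e) ⟨fun a => ?_, fun f hf => ?_⟩
  · have he : e ⁻¹' {a} = {a.1} := by
      ext i
      simp [e, Subtype.ext_iff, eq_comm]
    rw [Ultrafilter.mem_map, he]
    exact hU a.1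
  · simpa [Set.preimage_iInter] using hU_complete _ hf

theorem exists_tendsto_atTop_of_not_omegaComplete {U : Ultrafilter I}
    (hU : ¬ OmegaComplete U) : ∃ g : I → ℕ, Tendsto g (U : Filter I) atTop := by
  simp only [OmegaComplete, not_forall] at hU
  obtain ⟨f, hf, hf_inter⟩ := hU
  refine ⟨fun i => sInf {n | i ∉ f n}, tendsto_atTop.2 fun N => ?_⟩
  filter_upwards [(biInter_mem (Set.finite_Iio N)).2 fun k _ => hf k,
    compl_mem_iff_notMem.2 hf_inter] with i hi_mem hi_not_mem
  have hne : {n | i ∉ f n}.Nonempty := by simpa [Set.Nonempty] using hi_not_mem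
  by_contra! hlt
  exact Nat.sInf_mem hne (Set.mem_iInter₂.1 hi_mem _ hlt)

end Ultrafilter

section LinearUltrapower

variable {I : Type*} {Φ : Filter I} {a b x y : Quotient (redSetoid Φ fun _ : I => ℕ)}

theorem eventually_dist_out_le_one_of_rRefl (h : rRefl (redRel Φ fun _ => linRel) a b) :
    ∀ᶠ i in Φ, Nat.dist (a.out i) (b.out i) ≤ 1 := by
  rcases h with h | rfl
  · rw [← a.out_eq, ← b.out_eq] at h
    exact (show ∀ᶠ i in Φ, linRel (a.out i) (b.out i) from h).mono fun _ hi => hi.le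
  · exact Eventually.of_forall fun _ => by simp

theorem eventually_dist_out_le_one_of_rStep {e : Bool}
    (h : rStep (redRel Φ fun _ => linRel) e a b) :
    ∀ᶠ i in Φ, Nat.dist (a.out i) (b.out i) ≤ 1 := by
  cases e
  · exact eventually_dist_out_le_one_of_rRefl h
  · exact (eventually_dist_out_le_one_of_rRefl h).mono fun i hi => by rwa [Nat.dist_comm]

theorem IsPath.eventually_dist_out_le {m : ℕ} {z : Fin m → _} {ε : Fin (m + 1) → Bool}
    (h : IsPath (redRel Φ fun _ => linRel) z ε x y) :
    ∀ᶠ i in Φ, Nat.dist (x.out i) (y.out i) ≤ m + 1 := by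
  set p := pathPts x y z
  have hp : ∀ k : Fin (m + 2), ∀ᶠ i in Φ, Nat.dist ((p 0).out i) ((p k).out i) ≤ k := by
    intro k
    induction k using Fin.induction with
    | zero => exact Eventually.of_forall fun _ => by simp
    | succ k ih =>
      filter_upwards [ih, eventually_dist_out_le_one_of_rStep (h k)] with i hi hk
      calc _ ≤ _ := Nat.dist.triangle_inequality _ ((p k.castSucc).out i) _
        _ ≤ k + 1 := add_le_add hi hk
  simpa [p, pathPts] using hp (Fin.last _)

theorem eventually_dist_le_of_dLE {n : ℕ} {u v : I → ℕ}
    (h : dLE (redRel Φ fun _ => linRel) n ⟦u⟧ ⟦v⟧) :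
    ∀ᶠ i in Φ, Nat.dist (u i) (v i) ≤ n + 1 := by
  obtain ⟨m, hmn, z, ε, hpath⟩ := h
  filter_upwards [hpath.eventually_dist_out_le, Quotient.mk_out (s := redSetoid Φ _) u,
    Quotient.mk_out (s := redSetoid Φ _) v] with i hi hu hv
  rw [hu, hv] at hi
  omega

end LinearUltrapower

theorem stmt_13_general {I : Type*} (hI : NoMeasurableLE I)
    (U : Ultrafilter I) (hU : NonPrincipal U) :
    ¬ Conn (redRel (U : Filter I) (fun _ : I => linRel)) := by
  intro hconn
  obtain ⟨g, hg⟩ := Ultrafilter.exists_tendsto_atTop_of_not_omegaComplete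
    (Ultrafilter.not_omegaComplete_of_noMeasurableLE hI hU)
  obtain ⟨n, hn⟩ := hconn ⟦fun _ => 0⟧ ⟦g⟧
  obtain ⟨i, hi, hgi⟩ :=
    ((eventually_dist_le_of_dLE hn).and (hg.eventually_ge_atTop (n + 2))).exists
  rw [Nat.dist_zero_left] at hi
  omega

theorem stmt_13 {I : Type*} [Infinite I] (hI : NoMeasurableLE I)
    (U : Ultrafilter I) (hU : NonPrincipal U) :
    ¬ Conn (redRel (U : Filter I) (fun _ : I => linRel)) :=
  stmt_13_general hI U hU
end
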